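/- arXiv:1610.09965 — 2 statements merged into one kernel-verified Lean document; each statement's English description precedes it below -/
import Mathlib

section
/- Let (A_n,B_n)_{n≥1} be a bivariate sequence of iid real-valued random vectors. Then the following assertions are equivalent: (a) A_1B_2+B_1=g(A_1A_2) a.s. for some measurable function g:R→R; (b) for some c∈R, either A_1c+B_1=c a.s., or (A_1,B_1)=(1,c) a.s. -/
open MeasureTheory ProbabilityTheory Filter
open scoped ENNReal NNReal Topology

noncomputable section

namespace Perpetuities

/-- The positive part of the logarithm, with the convention `log⁺ 0 = 0`. -/
def logplus (x : ℝ) : ℝ := max (Real.log x) 0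

/-- `Pprod A n = Π_n = A_1 ⋯ A_n` (with `Π_0 = 1`); here `A n` is the paper's `A_{n+1}`. -/
def Pprod {Ω : Type*} (A : ℕ → Ω → ℝ) (n : ℕ) (ω : Ω) : ℝ := ∏ k ∈ Finset.range n, A k ω

/-- `Ssum A B n = ∑_{k=1}^n Π_{k-1} B_k = Ψ_1 ∘ ⋯ ∘ Ψ_n (0)`. -/
def Ssum {Ω : Type*} (A B : ℕ → Ω → ℝ) (n : ℕ) (ω : Ω) : ℝ :=
  ∑ k ∈ Finset.range n, Pprod A k ω * B k ω

/-- The perpetuity `Z_∞ = ∑_{n ≥ 1} Π_{n-1} B_n`. -/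
def Zinf {Ω : Type*} (A B : ℕ → Ω → ℝ) (ω : Ω) : ℝ := ∑' n, Pprod A n ω * B n ω

/-- `(A_n, B_n)_{n ≥ 1}` is a sequence of iid `ℝ²`-valued random vectors under `P`. -/
def IsIIDSeq {Ω : Type*} [MeasurableSpace Ω] (P : Measure Ω) (A B : ℕ → Ω → ℝ) : Prop :=
  (∀ n, Measurable (A n)) ∧ (∀ n, Measurable (B n)) ∧
    iIndepFun (fun n ω => (A n ω, B n ω)) P ∧
    ∀ n, P.map (fun ω => (A n ω, B n ω)) = P.map (fun ω => (A 0 ω, B 0 ω))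

/-- The function `J` associated with the random variable `X = - log |A|`: `J(0) = 1`, and
for `x > 0`, `J(x) = x / E(X⁺ ∧ x)` if `P(X > 0) > 0`, and `J(x) = x` otherwise. -/
def J {Ω : Type*} [MeasurableSpace Ω] (P : Measure Ω) (A : Ω → ℝ) (x : ℝ) : ℝ :=
  if x = 0 then 1
  else if 0 < P {ω | 0 < - Real.log |A ω|} then
    x / ∫ ω, min (max (- Real.log |A ω|) 0) x ∂ P
  else x

/-- `|f n| → ∞` in `μ`-probability. -/
def TendstoInfInMeasure {Ω : Type*} [MeasurableSpace Ω] (μ : Measure Ω) (f : ℕ → Ω → ℝ) : Prop :=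
  ∀ x : ℝ, 0 < x → Tendsto (fun n => μ {ω | |f n ω| ≤ x}) atTop (nhds 0)

end Perpetuities

/-
Write `(a, b)` and `(a', b')` for `(A_1, B_1)` and `(A_2, B_2)`. By symmetry of the product law,
`a b' + b = g(a a') = a' b + b'` a.s., i.e. `b' (a - 1) = b (a' - 1)`. If `a ≠ 1` with positive
probability, fixing one such `(a, b)` gives `b' = -c (a' - 1)` a.s. with `c = -b / (a - 1)`, that
is `a' c + b' = c`. Otherwise `a = a' = 1` a.s. and `b + b' = g 1` a.s., which forces `b` to be
a.s. constant.
-/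

namespace Perpetuities

section LawOfPair

variable {μ : Measure (ℝ × ℝ)} {g : ℝ → ℝ}

lemma ae_ae_snd_mul_sub_one_eq_of_ae_prod [SFinite μ]
    (h : ∀ᵐ z ∂ μ.prod μ, z.1.1 * z.2.2 + z.1.2 = g (z.1.1 * z.2.1)) :
    ∀ᵐ x ∂ μ, ∀ᵐ y ∂ μ, y.2 * (x.1 - 1) = x.2 * (y.1 - 1) := by
  have hswap : ∀ᵐ z ∂ μ.prod μ, z.2.1 * z.1.2 + z.2.2 = g (z.2.1 * z.1.1) :=
    (Measure.measurePreserving_swap (μ := μ) (ν := μ)).quasiMeasurePreserving.ae h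
  have hcross : ∀ᵐ z ∂ μ.prod μ, z.2.2 * (z.1.1 - 1) = z.1.2 * (z.2.1 - 1) := by
    filter_upwards [h, hswap] with z h₁ h₂
    rw [mul_comm z.2.1 z.1.1] at h₂
    linarith
  exact Measure.ae_ae_of_ae_prod hcross

lemma exists_ae_fixed_point_of_frequently_fst_ne_one (hne : ∃ᵐ x ∂ μ, x.1 ≠ 1)
    (h : ∀ᵐ x ∂ μ, ∀ᵐ y ∂ μ, y.2 * (x.1 - 1) = x.2 * (y.1 - 1)) :
    ∃ c : ℝ, ∀ᵐ y ∂ μ, y.1 * c + y.2 = c := by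
  obtain ⟨x, hx, hx1⟩ := (h.and_frequently hne).exists
  have hx1' : x.1 - 1 ≠ 0 := sub_ne_zero.mpr hx1
  refine ⟨-(x.2 / (x.1 - 1)), ?_⟩
  filter_upwards [hx] with y hy
  field_simp
  linarith

lemma exists_ae_snd_eq_of_ae_fst_eq_one [SFinite μ] [NeZero μ] (h1 : ∀ᵐ x ∂ μ, x.1 = 1)
    (h : ∀ᵐ z ∂ μ.prod μ, z.1.1 * z.2.2 + z.1.2 = g (z.1.1 * z.2.1)) :
    ∃ c : ℝ, ∀ᵐ x ∂ μ, x.1 = 1 ∧ x.2 = c := by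
  obtain ⟨x, hx1, hx⟩ := (h1.and (Measure.ae_ae_of_ae_prod h)).exists
  refine ⟨g 1 - x.2, ?_⟩
  filter_upwards [h1, hx] with y hy1 hy
  rw [hx1, hy1, one_mul, one_mul] at hy
  exact ⟨hy1, by linarith⟩

lemma exists_ae_fixed_point_or_ae_eq_of_ae_prod [SFinite μ] [NeZero μ]
    (h : ∀ᵐ z ∂ μ.prod μ, z.1.1 * z.2.2 + z.1.2 = g (z.1.1 * z.2.1)) :
    ∃ c : ℝ, (∀ᵐ x ∂ μ, x.1 * c + x.2 = c) ∨ (∀ᵐ x ∂ μ, x.1 = 1 ∧ x.2 = c) := by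
  by_cases h1 : ∀ᵐ x ∂ μ, x.1 = 1
  · obtain ⟨c, hc⟩ := exists_ae_snd_eq_of_ae_fst_eq_one h1 h
    exact ⟨c, Or.inr hc⟩
  · obtain ⟨c, hc⟩ := exists_ae_fixed_point_of_frequently_fst_ne_one
      (not_eventually.mp h1) (ae_ae_snd_mul_sub_one_eq_of_ae_prod h)
    exact ⟨c, Or.inl hc⟩

end LawOfPair

namespace IsIIDSeq

variable {Ω : Type*} [MeasurableSpace Ω] {P : Measure Ω} {A B : ℕ → Ω → ℝ}

lemma measurable_pair (h : IsIIDSeq P A B) (n : ℕ) : Measurable fun ω => (A n ω, B n ω) :=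
  (h.1 n).prodMk (h.2.1 n)

lemma identDistrib (h : IsIIDSeq P A B) (n : ℕ) :
    IdentDistrib (fun ω => (A n ω, B n ω)) (fun ω => (A 0 ω, B 0 ω)) P P :=
  ⟨(h.measurable_pair n).aemeasurable, (h.measurable_pair 0).aemeasurable, h.2.2.2 n⟩

lemma map_pair_eq_prod [IsProbabilityMeasure P] (h : IsIIDSeq P A B) :
    P.map (fun ω => ((A 0 ω, B 0 ω), (A 1 ω, B 1 ω))) =
      (P.map fun ω => (A 0 ω, B 0 ω)).prod (P.map fun ω => (A 0 ω, B 0 ω)) := by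
  have := (indepFun_iff_map_prod_eq_prod_map_map (h.measurable_pair 0).aemeasurable
    (h.measurable_pair 1).aemeasurable).mp (h.2.2.1.indepFun zero_ne_one)
  rwa [(h.identDistrib 1).map_eq] at this

lemma ae_prod_of_ae [IsProbabilityMeasure P] (h : IsIIDSeq P A B)
    {p : (ℝ × ℝ) × (ℝ × ℝ) → Prop} (hp : MeasurableSet {z | p z})
    (hP : ∀ᵐ ω ∂ P, p ((A 0 ω, B 0 ω), (A 1 ω, B 1 ω))) :
    ∀ᵐ z ∂ (P.map fun ω => (A 0 ω, B 0 ω)).prod (P.map fun ω => (A 0 ω, B 0 ω)), p z := by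
  rw [← h.map_pair_eq_prod]
  exact (ae_map_iff ((h.measurable_pair 0).prodMk (h.measurable_pair 1)).aemeasurable hp).mpr hP

lemma ae_of_ae_zero (h : IsIIDSeq P A B) (n : ℕ) {p : ℝ × ℝ → Prop}
    (hp : MeasurableSet {x | p x}) (h₀ : ∀ᵐ ω ∂ P, p (A 0 ω, B 0 ω)) :
    ∀ᵐ ω ∂ P, p (A n ω, B n ω) :=
  (h.identDistrib n).symm.ae_mem_snd hp h₀

end IsIIDSeq

/-- **Lemma 4.2** (Grincevičius). Let `(A_n, B_n)_{n ≥ 1}` be a sequence of iid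
`ℝ²`-valued random vectors. Then the following are equivalent:
(a) `A_1 B_2 + B_1 = g(A_1 A_2)` a.s. for some measurable function `g : ℝ → ℝ`;
(b) for some `c ∈ ℝ`, either `A_1 c + B_1 = c` a.s., or `(A_1, B_1) = (1, c)` a.s. -/
theorem grincevicius
    {Ω : Type*} [MeasurableSpace Ω] (P : Measure Ω) [IsProbabilityMeasure P]
    (A B : ℕ → Ω → ℝ) (hiid : IsIIDSeq P A B) :
    (∃ g : ℝ → ℝ, Measurable g ∧
        ∀ᵐ ω ∂ P, A 0 ω * B 1 ω + B 0 ω = g (A 0 ω * A 1 ω)) ↔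
      (∃ c : ℝ, (∀ᵐ ω ∂ P, A 0 ω * c + B 0 ω = c) ∨
        (∀ᵐ ω ∂ P, A 0 ω = 1 ∧ B 0 ω = c)) := by
  have hX₀ : AEMeasurable (fun ω => (A 0 ω, B 0 ω)) P := (hiid.measurable_pair 0).aemeasurable
  constructor
  · rintro ⟨g, hg, hae⟩
    have : IsProbabilityMeasure (P.map fun ω => (A 0 ω, B 0 ω)) :=
      Measure.isProbabilityMeasure_map hX₀
    have hprod := hiid.ae_prod_of_ae
      (p := fun z => z.1.1 * z.2.2 + z.1.2 = g (z.1.1 * z.2.1))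
      (measurableSet_eq_fun (by fun_prop) (by fun_prop)) hae
    obtain ⟨c, hc | hc⟩ := exists_ae_fixed_point_or_ae_eq_of_ae_prod hprod
    · exact ⟨c, Or.inl (ae_of_ae_map hX₀ hc)⟩
    · exact ⟨c, Or.inr (ae_of_ae_map hX₀ hc)⟩
  · rintro ⟨c, hc | hc⟩
    · have hc₁ : ∀ᵐ ω ∂ P, A 1 ω * c + B 1 ω = c :=
        hiid.ae_of_ae_zero 1 (p := fun x => x.1 * c + x.2 = c)
          (measurableSet_eq_fun (by fun_prop) (by fun_prop)) hc
      refine ⟨fun x => c - c * x, by fun_prop, ?_⟩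
      filter_upwards [hc, hc₁] with ω h₀ h₁
      linear_combination h₀ + A 0 ω * h₁
    · have hc₁ : ∀ᵐ ω ∂ P, A 1 ω = 1 ∧ B 1 ω = c :=
        hiid.ae_of_ae_zero 1 (p := fun x => x.1 = 1 ∧ x.2 = c)
          ((measurableSet_eq_fun (by fun_prop) (by fun_prop)).inter
            (measurableSet_eq_fun (by fun_prop) (by fun_prop))) hc
      refine ⟨fun _ => 2 * c, measurable_const, ?_⟩
      filter_upwards [hc, hc₁] with ω ⟨hA₀, hB₀⟩ ⟨_, hB₁⟩
      rw [hA₀, hB₀, hB₁]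
      ring

end Perpetuities
end
end

section
/- In the Markov-modulated setting, if P_i(A_1^i=1)=1 for some i∈S, then P_j(A_1^j=1)=1 for all j∈S. -/
/-!
Conditionally on the chain following a given path, the factors `A_k` are independent, with
laws determined by the edges of the path. A product of independent real factors that is almost
surely a nonzero constant forces every factor to be almost surely constant. Hence
`P_i(A_1^i = 1) = 1` makes `A` deterministic on every edge of every first-return cycle at `i`,
with product `1` around the cycle, and by concatenation the same holds around every loop at `i`.
A loop `s` at `j` is compared with the loops `u s w` and `u w` at `i`, where `u` runs from `i`
to `j` and `w` back: both have product `1`, so `s` has product `1`, and this gives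
`P_j(A_1^j = 1) = 1`.
-/

open MeasureTheory ProbabilityTheory Filter
open scoped ENNReal NNReal Topology

noncomputable section

namespace Perpetuities

/-- Weak convergence of a sequence of (probability) measures on `ℝ`. -/
def WeakLim (μ : ℕ → Measure ℝ) (ν : Measure ℝ) : Prop :=
  ∀ f : BoundedContinuousFunction ℝ ℝ,
    Tendsto (fun n => ∫ x, f x ∂ μ n) atTop (nhds (∫ x, f x ∂ ν))

/-- `d` is the lattice span (period) of the distribution of the `ℕ`-valued random
variable `T` under `μ`, i.e. `d` is the greatest common divisor of the support. -/
def LatticeSpan {Ω : Type*} [MeasurableSpace Ω] (μ : Measure Ω) (T : Ω → ℕ) (d : ℕ) : Prop :=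
  (∀ n, 0 < μ {ω | T ω = n} → d ∣ n) ∧ ∀ e : ℕ, (∀ n, 0 < μ {ω | T ω = n} → e ∣ n) → e ∣ d

/-- The Markov-modulated setting: an ergodic (irreducible, aperiodic, positive recurrent)
Markov chain `M` on a countable state space `S` with transition matrix `p` and stationary
distribution `π`, modulating a sequence `(A_n, B_n)_{n ≥ 1}` of real random pairs (indexed
here so that `A n`, `B n` are the paper's `A_{n+1}`, `B_{n+1}`): conditionally on the whole
path of the chain, the pairs are independent and the conditional law of `(A_{n+1}, B_{n+1})`
given the path depends only on `(M_n, M_{n+1})`, via the stochastic kernel `K`.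
`P i` is the underlying probability measure conditioned on `M 0 = i`. -/
structure MMSetting (S : Type*) (Ω : Type*) [MeasurableSpace S] [MeasurableSingletonClass S]
    [Countable S] [MeasurableSpace Ω] where
  P : S → Measure Ω
  prob : ∀ i, IsProbabilityMeasure (P i)
  π : S → ℝ≥0∞
  πsum : ∑' i, π i = 1
  πpos : ∀ i, 0 < π i
  p : S → S → ℝ≥0∞
  psum : ∀ i, ∑' j, p i j = 1
  stationary : ∀ j, ∑' i, π i * p i j = π j
  K : S → S → Measure (ℝ × ℝ)
  Kprob : ∀ i j, IsProbabilityMeasure (K i j)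
  M : ℕ → Ω → S
  A : ℕ → Ω → ℝ
  B : ℕ → Ω → ℝ
  measM : ∀ n, Measurable (M n)
  measA : ∀ n, Measurable (A n)
  measB : ∀ n, Measurable (B n)
  start : ∀ i, P i {ω | M 0 ω = i} = 1
  chain : ∀ (i : S) (n : ℕ) (path : ℕ → S), path 0 = i →
    P i (⋂ k ∈ Finset.range (n + 1), {ω | M k ω = path k})
      = ∏ k ∈ Finset.range n, p (path k) (path (k + 1))
  modulated : ∀ (i : S) (n : ℕ) (path : ℕ → S) (E : ℕ → Set (ℝ × ℝ)), path 0 = i →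
    (∀ k, MeasurableSet (E k)) →
    P i ((⋂ k ∈ Finset.range (n + 1), {ω | M k ω = path k}) ∩
        ⋂ k ∈ Finset.range n, {ω | (A k ω, B k ω) ∈ E k})
      = P i (⋂ k ∈ Finset.range (n + 1), {ω | M k ω = path k})
        * ∏ k ∈ Finset.range n, K (path k) (path (k + 1)) (E k)
  irreducible : ∀ i j, ∃ n, 0 < P i {ω | M n ω = j}
  recurrent : ∀ i, P i {ω | ∃ n, 0 < n ∧ M n ω = i} = 1
  posRecurrent : ∀ i, ∫⁻ ω, ((sInf {n | 0 < n ∧ M n ω = i} : ℕ) : ℝ≥0∞) ∂ P i < ⊤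
  aperiodic : ∀ (i : S) (d : ℕ), (∀ n, 0 < n → 0 < P i {ω | M n ω = i} → d ∣ n) → d = 1

namespace MMSetting

variable {S : Type*} [MeasurableSpace S] [MeasurableSingletonClass S] [Countable S]
variable {Ω : Type*} [MeasurableSpace Ω]
variable (X : MMSetting S Ω)

/-- `Pπ = ∑ i, π i • P i`, the stationary (unconditional) probability measure. -/
def Pπ : Measure Ω := Measure.sum fun i => X.π i • X.P i

/-- `Pprod n = Π_n = A_1 ⋯ A_n`, with `Π_0 = 1`. -/
def Pprod (n : ℕ) (ω : Ω) : ℝ := ∏ k ∈ Finset.range n, X.A k ω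

/-- `Ssum n = ∑_{k=1}^n Π_{k-1} B_k`, the value `Ψ_1 ∘ ⋯ ∘ Ψ_n (0)` of the backward
iteration started at `0`. -/
def Ssum (n : ℕ) (ω : Ω) : ℝ := ∑ k ∈ Finset.range n, X.Pprod k ω * X.B k ω

/-- `Zb Z n = Ψ_1 ∘ ⋯ ∘ Ψ_n (Z) = Π_n Z + ∑_{k=1}^n Π_{k-1} B_k`, the backward iteration. -/
def Zb (Z : Ω → ℝ) (n : ℕ) (ω : Ω) : ℝ := X.Pprod n ω * Z ω + X.Ssum n ω

/-- `Zf Z n = Ψ_n ∘ ⋯ ∘ Ψ_1 (Z)`, the forward iteration. -/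
def Zf (Z : Ω → ℝ) : ℕ → Ω → ℝ
  | 0 => Z
  | n + 1 => fun ω => X.A n ω * Zf Z n ω + X.B n ω

/-- The perpetuity `Z_∞ = ∑_{n ≥ 1} Π_{n-1} B_n`. -/
def Zinf (ω : Ω) : ℝ := ∑' n, X.Pprod n ω * X.B n ω

/-- `tau i n = τ_n(i)`, the `n`-th return time of the driving chain to the state `i`
(`τ_0(i) = 0`). -/
def tau (i : S) : ℕ → Ω → ℕ
  | 0 => fun _ => 0
  | n + 1 => fun ω => sInf {k | tau i n ω < k ∧ X.M k ω = i}

/-- `A_1^i = Π_{τ(i)}`. -/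
def Ai (i : S) (ω : Ω) : ℝ := X.Pprod (X.tau i 1 ω) ω

/-- `B_1^i = ∑_{k=1}^{τ(i)} Π_{k-1} B_k`. -/
def Bi (i : S) (ω : Ω) : ℝ := X.Ssum (X.tau i 1 ω) ω

/-- `W^i = max_{1 ≤ k ≤ τ(i)} |Π_{k-1} B_k|`. -/
def Wi (i : S) (ω : Ω) : ℝ :=
  (((Finset.range (X.tau i 1 ω)).sup fun k => ‖X.Pprod k ω * X.B k ω‖₊ : ℝ≥0) : ℝ)

/-- `S_{τ(i)} = - log |Π_{τ(i)}|`. -/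
def Stau (i : S) (ω : Ω) : ℝ := - Real.log |X.Ai i ω|

/-- The function `J_i`: `J_i(0) = 1`, and for `x > 0`, `J_i(x) = x / E_i (S_{τ(i)}⁺ ∧ x)`
if `P_i(S_{τ(i)} ≤ 0) < 1`, and `J_i(x) = x` otherwise. -/
def Ji (i : S) (x : ℝ) : ℝ :=
  if x = 0 then 1
  else if X.P i {ω | X.Stau i ω ≤ 0} < 1 then
    x / ∫ ω, min (max (X.Stau i ω) 0) x ∂ X.P i
  else x

/-- `τ̂(i) = inf {k ≥ 1 : M_k = i, Π_k = 1}`. -/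
def hatτ (i : S) (ω : Ω) : ℕ := sInf {k | 0 < k ∧ X.M k ω = i ∧ X.Pprod k ω = 1}

/-- `Z` is an admissible initial value: it is (conditionally on `M 0`, i.e. under each `P i`)
independent of the modulated sequence `(M_n, A_n, B_n)_{n ≥ 1}`. -/
def Admissible (Z : Ω → ℝ) : Prop :=
  Measurable Z ∧
    ∀ i : S, IndepFun Z (fun ω => fun n : ℕ => (X.M (n + 1) ω, X.A n ω, X.B n ω)) (X.P i)

/-- The degeneracy condition: `A_1 c_{M_1} + B_1 = c_{M_0}` a.s. for the family `c`. -/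
def DegenD (c : S → ℝ) : Prop :=
  ∀ᵐ ω ∂ X.Pπ, X.A 0 ω * c (X.M 1 ω) + X.B 0 ω = c (X.M 0 ω)

/-- The dual degeneracy condition: `A_1 c_{M_0} + B_1 = c_{M_1}` a.s. for the family `c`. -/
def DegenDdual (c : S → ℝ) : Prop :=
  ∀ᵐ ω ∂ X.Pπ, X.A 0 ω * c (X.M 0 ω) + X.B 0 ω = c (X.M 1 ω)

end MMSetting

end Perpetuities

/-- The point carrying all the mass of `μ`, if there is one, and `0` otherwise. Because of this
junk value, a nonzero product of `diracPoint`s can only come from Dirac masses. -/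
def diracPoint (μ : Measure ℝ) : ℝ :=
  open Classical in if h : ∃ c, ∀ᵐ x ∂μ, x = c then h.choose else 0

lemma ae_eq_diracPoint {μ : Measure ℝ} (h : ∃ c, ∀ᵐ x ∂μ, x = c) :
    ∀ᵐ x ∂μ, x = diracPoint μ := by
  rw [diracPoint, dif_pos h]
  exact h.choose_spec

lemma ae_eq_diracPoint_of_ne_zero {μ : Measure ℝ} (h : diracPoint μ ≠ 0) :
    ∀ᵐ x ∂μ, x = diracPoint μ := by
  refine ae_eq_diracPoint (not_not.1 fun hne => h ?_)
  rw [diracPoint, dif_neg hne]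

lemma exists_ae_eq_of_ae_mul_eq {α β : Type*} [MeasurableSpace α] [MeasurableSpace β]
    {μ : Measure α} {ν : Measure β} [NeZero μ] [SFinite ν] [NeZero ν] {f : α → ℝ} {g : β → ℝ}
    {r : ℝ} (hr : r ≠ 0) (h : ∀ᵐ p ∂μ.prod ν, f p.1 * g p.2 = r) : ∃ c, ∀ᵐ x ∂μ, f x = c := by
  have hslices := Measure.ae_ae_of_ae_prod h
  obtain ⟨x₀, hx₀⟩ := hslices.exists
  refine ⟨f x₀, ?_⟩
  filter_upwards [hslices] with x hx
  obtain ⟨y, hy, hy₀⟩ := (hx.and hx₀).exists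
  have hgy : g y ≠ 0 := by
    rintro hg
    rw [hg, mul_zero] at hy
    exact hr hy.symm
  exact mul_right_cancel₀ hgy (hy.trans hy₀.symm)

lemma exists_ae_eq_of_ae_pi_prod_eq {n : ℕ} {κ : Fin n → Measure ℝ}
    [∀ k, IsProbabilityMeasure (κ k)] {r : ℝ} (hr : r ≠ 0)
    (h : ∀ᵐ a ∂Measure.pi κ, ∏ k, a k = r) (k : Fin n) : ∃ c, ∀ᵐ x ∂κ k, x = c := by
  obtain ⟨m, rfl⟩ : ∃ m, n = m + 1 := Nat.exists_eq_succ_of_ne_zero k.pos.ne'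
  have hsplit := (measurePreserving_piFinSuccAbove κ k).symm
  refine exists_ae_eq_of_ae_mul_eq (ν := Measure.pi fun j => κ (k.succAbove j)) (f := id)
    (g := fun y : Fin m → ℝ => ∏ j, y j) hr ?_
  filter_upwards [hsplit.quasiMeasurePreserving.ae h] with p hp
  simpa [Fin.prod_univ_succAbove _ k] using hp

theorem ae_pi_prod_eq_iff {n : ℕ} {κ : Fin n → Measure ℝ} [∀ k, IsProbabilityMeasure (κ k)]
    {r : ℝ} (hr : r ≠ 0) :
    (∀ᵐ a ∂Measure.pi κ, ∏ k, a k = r) ↔ ∏ k, diracPoint (κ k) = r := by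
  have hpi : (∀ k, ∀ᵐ x ∂κ k, x = diracPoint (κ k)) →
      ∀ᵐ a ∂Measure.pi κ, a = fun k => diracPoint (κ k) :=
    Measure.ae_eq_pi (f := fun _ => id) (f' := fun k _ => diracPoint (κ k))
  constructor
  · intro h
    obtain ⟨a, ha, rfl⟩ := (h.and (hpi fun k =>
      ae_eq_diracPoint (exists_ae_eq_of_ae_pi_prod_eq hr h k))).exists
    exact ha
  · intro h
    have hd : ∀ k, diracPoint (κ k) ≠ 0 := fun k =>
      Finset.prod_ne_zero_iff.1 (h ▸ hr) k (Finset.mem_univ k)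
    filter_upwards [hpi fun k => ae_eq_diracPoint_of_ne_zero (hd k)] with a rfl
    exact h

namespace Perpetuities

section Paths

variable {S : Type*}

def pathProd {M : Type*} [CommMonoid M] (f : S → S → M) (n : ℕ) (s : ℕ → S) : M :=
  ∏ k ∈ Finset.range n, f (s k) (s (k + 1))

def IsFirstVisit (j : S) (n : ℕ) (s : ℕ → S) : Prop :=
  IsLeast {k | 0 < k ∧ s k = j} n

def pathAppend (m : ℕ) (u s : ℕ → S) : ℕ → S := fun k => if k ≤ m then u k else s (k - m)

variable {M : Type*} [CommMonoid M] {f : S → S → M}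

@[simp]
lemma pathProd_zero (s : ℕ → S) : pathProd f 0 s = 1 := Finset.prod_range_zero _

lemma pathProd_congr {n : ℕ} {s t : ℕ → S} (h : ∀ k ≤ n, s k = t k) :
    pathProd f n s = pathProd f n t :=
  Finset.prod_congr rfl fun k hk => by
    rw [Finset.mem_range] at hk
    rw [h k hk.le, h (k + 1) hk]

lemma pathProd_add (m n : ℕ) (s : ℕ → S) :
    pathProd f (m + n) s = pathProd f m s * pathProd f n (fun k => s (m + k)) := by
  simp only [pathProd, Finset.prod_range_add, Nat.add_assoc]

lemma pathAppend_of_le {m k : ℕ} (u s : ℕ → S) (hk : k ≤ m) : pathAppend m u s k = u k :=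
  if_pos hk

lemma pathAppend_add {m : ℕ} {u s : ℕ → S} (h : u m = s 0) (k : ℕ) :
    pathAppend m u s (m + k) = s k := by
  rcases Nat.eq_zero_or_pos k with rfl | hk
  · simpa [pathAppend] using h
  · simp [pathAppend, hk.ne']

lemma pathProd_pathAppend {m : ℕ} {u s : ℕ → S} (h : u m = s 0) (n : ℕ) :
    pathProd f (m + n) (pathAppend m u s) = pathProd f m u * pathProd f n s := by
  rw [pathProd_add, pathProd_congr fun k hk => pathAppend_of_le u s hk]
  simp only [pathAppend_add h]

lemma IsFirstVisit.congr {j : S} {n : ℕ} {s t : ℕ → S} (h : ∀ k ≤ n, s k = t k)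
    (hs : IsFirstVisit j n s) : IsFirstVisit j n t := by
  refine ⟨⟨hs.1.1, h n le_rfl ▸ hs.1.2⟩, fun k ⟨hk, hkj⟩ => ?_⟩
  by_contra! hlt
  exact hlt.not_ge (hs.2 ⟨hk, (h k hlt.le).trans hkj⟩)

lemma exists_isFirstVisit_le {j : S} {n : ℕ} {s : ℕ → S} (hn : 0 < n) (hs : s n = j) :
    ∃ m ≤ n, IsFirstVisit j m s := by
  have hmem : n ∈ {k | 0 < k ∧ s k = j} := ⟨hn, hs⟩
  exact ⟨_, Nat.sInf_le hmem, Nat.sInf_mem ⟨n, hmem⟩, fun _ hk => Nat.sInf_le hk⟩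

lemma sInf_eq_iff_isFirstVisit {j : S} {n : ℕ} {s : ℕ → S} (hn : 0 < n) :
    sInf {k | 0 < k ∧ s k = j} = n ↔ IsFirstVisit j n s := by
  refine ⟨fun h => ?_, IsLeast.csInf_eq⟩
  subst h
  exact ⟨Nat.sInf_mem (Nat.nonempty_of_pos_sInf hn), fun _ hk => Nat.sInf_le hk⟩

end Paths

namespace MMSetting

variable {S : Type*} [MeasurableSpace S] [MeasurableSingletonClass S] [Countable S]
  {Ω : Type*} [MeasurableSpace Ω] (X : MMSetting S Ω) {i : S}

instance (i : S) : IsProbabilityMeasure (X.P i) := X.prob i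

def pathEvent (n : ℕ) (s : ℕ → S) : Set Ω := ⋂ k ∈ Finset.range (n + 1), {ω | X.M k ω = s k}

/-- The conditional law of `A_{k+1}` given `M_k = s` and `M_{k+1} = t`. -/
def edgeLaw (s t : S) : Measure ℝ := (X.K s t).map Prod.fst

instance (s t : S) : IsProbabilityMeasure (X.edgeLaw s t) :=
  have := X.Kprob s t
  Measure.isProbabilityMeasure_map measurable_fst.aemeasurable

def edgeValue (s t : S) : ℝ := diracPoint (X.edgeLaw s t)

lemma mem_pathEvent {X : MMSetting S Ω} {n : ℕ} {s : ℕ → S} {ω : Ω} :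
    ω ∈ X.pathEvent n s ↔ ∀ k ≤ n, X.M k ω = s k := by
  simp [pathEvent]

lemma measurableSet_pathEvent (n : ℕ) (s : ℕ → S) : MeasurableSet (X.pathEvent n s) :=
  Finset.measurableSet_biInter _ fun k _ => X.measM k (measurableSet_singleton (s k))

lemma measure_pathEvent {n : ℕ} {s : ℕ → S} (h0 : s 0 = i) :
    X.P i (X.pathEvent n s) = pathProd X.p n s :=
  X.chain i n s h0

lemma measurable_Pprod (n : ℕ) : Measurable (X.Pprod n) :=
  Finset.measurable_prod _ fun k _ => X.measA k

lemma measure_pathEvent_inter_forall_mem {n : ℕ} {s : ℕ → S} (h0 : s 0 = i)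
    {F : Fin n → Set ℝ} (hF : ∀ k, MeasurableSet (F k)) :
    X.P i (X.pathEvent n s ∩ {ω | ∀ k : Fin n, X.A k ω ∈ F k})
      = X.P i (X.pathEvent n s) * ∏ k : Fin n, X.edgeLaw (s k) (s (k + 1)) (F k) := by
  classical
  let E : ℕ → Set (ℝ × ℝ) := fun k => if h : k < n then Prod.fst ⁻¹' F ⟨k, h⟩ else Set.univ
  have hE : ∀ k, MeasurableSet (E k) := fun k => by
    by_cases h : k < n
    · simpa [E, h] using measurable_fst (hF _)
    · simp [E, h]
  have hset : {ω | ∀ k : Fin n, X.A k ω ∈ F k}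
      = ⋂ k ∈ Finset.range n, {ω | (X.A k ω, X.B k ω) ∈ E k} := by
    ext ω
    simp only [Set.mem_ofPred_eq, Set.mem_iInter, Finset.mem_range, Fin.forall_iff]
    exact forall₂_congr fun k hk => by simp [E, hk]
  have hK : ∀ k : Fin n, X.K (s k) (s (k + 1)) (E k) = X.edgeLaw (s k) (s (k + 1)) (F k) :=
    fun k => by simp only [E, dif_pos k.isLt, edgeLaw, Measure.map_apply measurable_fst (hF k)]
  rw [hset, pathEvent, X.modulated i n s E h0 hE,
    ← Fin.prod_univ_eq_prod_range fun k => X.K (s k) (s (k + 1)) (E k)]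
  simp only [hK]

lemma map_restrict_pathEvent {n : ℕ} {s : ℕ → S} (h0 : s 0 = i) :
    ((X.P i).restrict (X.pathEvent n s)).map (fun ω (k : Fin n) => X.A k ω)
      = X.P i (X.pathEvent n s) • Measure.pi fun k : Fin n => X.edgeLaw (s k) (s (k + 1)) := by
  set μ := ((X.P i).restrict (X.pathEvent n s)).map (fun ω (k : Fin n) => X.A k ω)
  have hbox : ∀ F : Fin n → Set ℝ, (∀ k, MeasurableSet (F k)) → μ (Set.univ.pi F)
      = X.P i (X.pathEvent n s) * ∏ k : Fin n, X.edgeLaw (s k) (s (k + 1)) (F k) := fun F hF => by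
    rw [Measure.map_apply (measurable_pi_lambda (fun ω (k : Fin n) => X.A k ω) fun k => X.measA k)
        (MeasurableSet.univ_pi hF),
      Measure.restrict_apply' (X.measurableSet_pathEvent n s), Set.inter_comm,
      ← X.measure_pathEvent_inter_forall_mem h0 hF]
    simp [Set.preimage]
  by_cases hz : X.P i (X.pathEvent n s) = 0
  · simp [μ, Measure.restrict_eq_zero.2 hz, hz]
  · have hfin := measure_ne_top (X.P i) (X.pathEvent n s)
    have hpi : Measure.pi (fun k : Fin n => X.edgeLaw (s k) (s (k + 1)))
        = (X.P i (X.pathEvent n s))⁻¹ • μ := Measure.pi_eq fun F hF => by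
      rw [Measure.smul_apply, hbox F hF, smul_eq_mul, ← mul_assoc,
        ENNReal.inv_mul_cancel hz hfin, one_mul]
    rw [hpi, smul_smul, ENNReal.mul_inv_cancel hz hfin, one_smul]

lemma ae_restrict_pathEvent_Pprod_eq_one_iff {n : ℕ} {s : ℕ → S} (h0 : s 0 = i)
    (hs : pathProd X.p n s ≠ 0) :
    (∀ᵐ ω ∂(X.P i).restrict (X.pathEvent n s), X.Pprod n ω = 1)
      ↔ pathProd X.edgeValue n s = 1 := by
  have hvec : Measurable fun ω (k : Fin n) => X.A k ω := measurable_pi_lambda _ fun k => X.measA k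
  have hone : MeasurableSet {a : Fin n → ℝ | ∏ k, a k = 1} :=
    (by fun_prop : Measurable fun a : Fin n → ℝ => ∏ k, a k) (measurableSet_singleton 1)
  rw [← X.measure_pathEvent h0] at hs
  calc (∀ᵐ ω ∂(X.P i).restrict (X.pathEvent n s), X.Pprod n ω = 1)
      ↔ ∀ᵐ a ∂X.P i (X.pathEvent n s) • Measure.pi (fun k : Fin n => X.edgeLaw (s k) (s (k + 1))),
          ∏ k, a k = 1 := by
        rw [← X.map_restrict_pathEvent h0, ae_map_iff hvec.aemeasurable hone]
        simp [Pprod, Finset.prod_range]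
    _ ↔ ∏ k : Fin n, X.edgeValue (s k) (s (k + 1)) = 1 := by
        rw [Measure.ae_ennreal_smul_measure_iff hs, ae_pi_prod_eq_iff one_ne_zero]
        rfl
    _ ↔ pathProd X.edgeValue n s = 1 := by
        rw [pathProd, Fin.prod_univ_eq_prod_range fun k => X.edgeValue (s k) (s (k + 1))]

lemma tau_one_eq_iff {j : S} {n : ℕ} (hn : 0 < n) {ω : Ω} :
    X.tau j 1 ω = n ↔ IsFirstVisit j n fun k => X.M k ω := by
  simpa [tau] using sInf_eq_iff_isFirstVisit hn

lemma Ai_eq_Pprod_of_mem_pathEvent {n : ℕ} {s : ℕ → S} (hs : IsFirstVisit i n s)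
    {ω : Ω} (hω : ω ∈ X.pathEvent n s) : X.Ai i ω = X.Pprod n ω := by
  rw [Ai, (X.tau_one_eq_iff hs.1.1).2 (hs.congr fun k hk => (mem_pathEvent.1 hω k hk).symm)]

lemma ae_of_forall_pathEvent {p : Ω → Prop} (n : ℕ)
    (h : ∀ s : ℕ → S, s 0 = i → ∀ᵐ ω ∂(X.P i).restrict (X.pathEvent n s), p ω) :
    ∀ᵐ ω ∂X.P i, p ω := by
  have hstart : ∀ᵐ ω ∂X.P i, X.M 0 ω = i :=
    (ae_iff_measure_eq (X.measM 0 (measurableSet_singleton i)).nullMeasurableSet).2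
      (by rw [measure_univ]; exact X.start i)
  have hpaths : ∀ᵐ ω ∂X.P i, ∀ v : Fin (n + 1) → S,
      ω ∈ X.pathEvent n (fun k => v (Fin.clamp k n)) → X.M 0 ω = i → p ω := by
    refine ae_all_iff.2 fun v => ?_
    by_cases hv : v (Fin.clamp 0 n) = i
    · filter_upwards [(ae_restrict_iff' (X.measurableSet_pathEvent n _)).1
        (h (fun k => v (Fin.clamp k n)) hv)] with ω hω hmem _ using hω hmem
    · exact .of_forall fun ω hmem h0 =>
        absurd ((mem_pathEvent.1 hmem 0 n.zero_le).symm.trans h0) hv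
  filter_upwards [hstart, hpaths] with ω h0 hω
  exact hω (fun k => X.M k ω) (mem_pathEvent.2 fun k hk => by simp [Fin.clamp, hk]) h0

lemma exists_pathProd_ne_zero (i j : S) : ∃ n s, s 0 = i ∧ s n = j ∧ pathProd X.p n s ≠ 0 := by
  obtain ⟨n, hn⟩ := X.irreducible i j
  by_contra! hnone
  refine hn.ne' (measure_eq_zero_iff_ae_notMem.2 (X.ae_of_forall_pathEvent n fun s h0 => ?_))
  by_cases hsn : s n = j
  · rw [Measure.restrict_eq_zero.2 ((X.measure_pathEvent h0).trans (hnone n s h0 hsn))]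
    simp
  · exact ae_restrict_of_forall_mem (X.measurableSet_pathEvent n s) fun ω hω hMn =>
      hsn ((mem_pathEvent.1 hω n le_rfl).symm.trans hMn)

lemma ae_restrict_pathEvent_Pprod_eq_one (h : X.P i {ω | X.Ai i ω = 1} = 1) {n : ℕ}
    {s : ℕ → S} (hs : IsFirstVisit i n s) :
    ∀ᵐ ω ∂(X.P i).restrict (X.pathEvent n s), X.Pprod n ω = 1 := by
  have hmeas : MeasurableSet {ω | ω ∈ X.pathEvent n s → X.Pprod n ω = 1} :=
    (X.measurableSet_pathEvent n s).imp (X.measurable_Pprod n (measurableSet_singleton 1))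
  rw [ae_restrict_iff' (X.measurableSet_pathEvent n s), ae_iff_measure_eq hmeas.nullMeasurableSet,
    measure_univ]
  refine le_antisymm prob_le_one (h ▸ measure_mono fun ω hω hmem => ?_)
  rwa [← X.Ai_eq_Pprod_of_mem_pathEvent hs hmem]

lemma pathProd_edgeValue_eq_one_of_loop (h : X.P i {ω | X.Ai i ω = 1} = 1) {n : ℕ} :
    ∀ {s : ℕ → S}, s 0 = i → s n = i → pathProd X.p n s ≠ 0 → pathProd X.edgeValue n s = 1 := by
  induction n using Nat.strong_induction_on with
  | _ n ih =>
  intro s h0 hn hp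
  rcases Nat.eq_zero_or_pos n with rfl | hpos
  · exact pathProd_zero s
  obtain ⟨m, hmn, hm⟩ := exists_isFirstVisit_le hpos hn
  obtain ⟨r, rfl⟩ := Nat.exists_eq_add_of_le hmn
  rw [pathProd_add] at hp ⊢
  rw [(X.ae_restrict_pathEvent_Pprod_eq_one_iff h0 (left_ne_zero_of_mul hp)).1
    (X.ae_restrict_pathEvent_Pprod_eq_one h hm), one_mul]
  exact ih r (by have := hm.1.1; omega) (by simpa using hm.1.2) hn (right_ne_zero_of_mul hp)

lemma pathProd_edgeValue_eq_one (h : X.P i {ω | X.Ai i ω = 1} = 1) {j : S} {n : ℕ}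
    {s : ℕ → S} (h0 : s 0 = j) (hn : s n = j) (hp : pathProd X.p n s ≠ 0) :
    pathProd X.edgeValue n s = 1 := by
  obtain ⟨a, u, hu0, hua, hup⟩ := X.exists_pathProd_ne_zero i j
  obtain ⟨b, w, hw0, hwb, hwp⟩ := X.exists_pathProd_ne_zero j i
  have hsw : s n = w 0 := hn.trans hw0.symm
  have huw : u a = w 0 := hua.trans hw0.symm
  have husw : u a = pathAppend n s w 0 := by rw [pathAppend_of_le s w n.zero_le, hua, h0]
  have hstart : ∀ t, pathAppend a u t 0 = i := fun t => (pathAppend_of_le u t a.zero_le).trans hu0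
  have hlong : pathProd X.edgeValue a u * (pathProd X.edgeValue n s * pathProd X.edgeValue b w)
      = 1 := by
    rw [← pathProd_pathAppend hsw, ← pathProd_pathAppend husw]
    refine X.pathProd_edgeValue_eq_one_of_loop h (hstart _) ?_ ?_
    · rw [pathAppend_add husw, pathAppend_add hsw, hwb]
    · rw [pathProd_pathAppend husw, pathProd_pathAppend hsw]
      exact mul_ne_zero hup (mul_ne_zero hp hwp)
  have hshort : pathProd X.edgeValue a u * pathProd X.edgeValue b w = 1 := by
    rw [← pathProd_pathAppend huw]
    refine X.pathProd_edgeValue_eq_one_of_loop h (hstart _) ?_ ?_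
    · rw [pathAppend_add huw, hwb]
    · rw [pathProd_pathAppend huw]
      exact mul_ne_zero hup hwp
  calc pathProd X.edgeValue n s
      = pathProd X.edgeValue n s * (pathProd X.edgeValue a u * pathProd X.edgeValue b w) := by
        rw [hshort, mul_one]
    _ = pathProd X.edgeValue a u * (pathProd X.edgeValue n s * pathProd X.edgeValue b w) := by
        ring
    _ = 1 := hlong

lemma ae_tau_eq_imp_Pprod_eq_one (h : X.P i {ω | X.Ai i ω = 1} = 1) (j : S) (n : ℕ) :
    ∀ᵐ ω ∂X.P j, X.tau j 1 ω = n → X.Pprod n ω = 1 := by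
  refine X.ae_of_forall_pathEvent n fun s h0 => ?_
  rcases Nat.eq_zero_or_pos n with rfl | hn
  · exact .of_forall fun ω _ => Finset.prod_range_zero _
  by_cases hs : IsFirstVisit j n s
  · by_cases hp : pathProd X.p n s = 0
    · rw [← X.measure_pathEvent h0, ← Measure.restrict_eq_zero] at hp
      simp [hp]
    · filter_upwards [(X.ae_restrict_pathEvent_Pprod_eq_one_iff h0 hp).2
        (X.pathProd_edgeValue_eq_one h h0 hs.1.2 hp)] with ω hω _ using hω
  · refine ae_restrict_of_forall_mem (X.measurableSet_pathEvent n s) fun ω hω hτ => absurd ?_ hs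
    exact ((X.tau_one_eq_iff hn).1 hτ).congr fun k hk => mem_pathEvent.1 hω k hk

end MMSetting

open MMSetting

/-- **Lemma 4.4** (solidarity). In the Markov-modulated setting: if `P_i(A_1^i = 1) = 1`
for some `i ∈ S`, then `P_j(A_1^j = 1) = 1` for all `j ∈ S`. -/
theorem cycle_product_one_solidarity
    {S : Type*} [MeasurableSpace S] [MeasurableSingletonClass S] [Countable S]
    {Ω : Type*} [MeasurableSpace Ω] (X : MMSetting S Ω)
    (i : S) (h : X.P i {ω | X.Ai i ω = 1} = 1) :
    ∀ j : S, X.P j {ω | X.Ai j ω = 1} = 1 := by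
  intro j
  have hAi : ∀ᵐ ω ∂X.P j, X.Ai j ω = 1 := by
    filter_upwards [ae_all_iff.2 (X.ae_tau_eq_imp_Pprod_eq_one h j)] with ω hω
    exact hω _ rfl
  rw [← measure_univ (μ := X.P j)]
  exact measure_congr (ae_eq_univ.2 (ae_iff.1 hAi))

end Perpetuities
end
end
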